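/- Let T be a tree rooted at a vertex r, let h = max_{v} dist(r,v) with h ≥ 3, and let S be a minimum independent ve-dominating set of T containing no leaf. Suppose u ∈ S satisfies dist(r,u) = h−1, every other vertex v ∈ S \ {u} satisfies dist(u,v) ≥ 3, and let w be the (unique) neighbour of u with dist(r,w) = h−2. Then (S \ {u}) ∪ {w} is also a minimum independent ve-dominating set of T containing no leaf. -/

import Mathlib

variable {V : Type*} [Fintype V] [DecidableEq V]

/-- A vertex `u` ve-dominates an edge `e` if `e` is incident to some vertex of `N[u]`. -/
def veDominates (G : SimpleGraph V) (u : V) (e : Sym2 V) : Prop :=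
  ∃ x ∈ e, x = u ∨ G.Adj u x

/-- `S` is a ve-dominating set: every edge is ve-dominated by some vertex of `S`. -/
def IsVEDomSet (G : SimpleGraph V) (S : Finset V) : Prop :=
  ∀ e ∈ G.edgeSet, ∃ u ∈ S, veDominates G u e

/-- `S` is an independent set. -/
def IsIndepSet (G : SimpleGraph V) (S : Finset V) : Prop :=
  ∀ u ∈ S, ∀ v ∈ S, ¬ G.Adj u v

/-- The ve-domination number `γ_ve(G)`. -/
noncomputable def gammaVE (G : SimpleGraph V) : ℕ :=
  sInf {n | ∃ S : Finset V, IsVEDomSet G S ∧ S.card = n}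

/-- The independent ve-domination number `i_ve(G)`. -/
noncomputable def iVE (G : SimpleGraph V) : ℕ :=
  sInf {n | ∃ S : Finset V, IsVEDomSet G S ∧ IsIndepSet G S ∧ S.card = n}

/-! Since `u` sits one level above the deepest level of the tree, every neighbour of `u` other
than its parent `w` is a deepest vertex, whose only neighbour is `u`; hence every edge met by
`N[u]` is met by `N[w]`. The other vertices of `S` are at distance at least 3 from `u`, so they
are neither `w` nor adjacent to it: the exchange keeps independence and cardinality. Finally `w`
is not a leaf, being adjacent both to `u` and to its own parent (it lies at depth `h - 2 ≥ 1`). -/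

open Finset

section

-- A fresh `V`, so that these lemmas do not pick up `[Fintype V] [DecidableEq V]` from above.
variable {V : Type*} {G : SimpleGraph V}

namespace SimpleGraph

lemma exists_adj_dist_lt {r x : V} (hx : 0 < G.dist r x) :
    ∃ y, G.Adj x y ∧ G.dist r y < G.dist r x := by
  obtain ⟨q, hq⟩ := exists_walk_of_dist_ne_zero hx.ne'
  have hnil : ¬q.Nil := Walk.not_nil_iff_lt_length.2 (hq ▸ hx)
  refine ⟨q.penultimate, (q.adj_penultimate hnil).symm, ?_⟩
  calc G.dist r q.penultimate ≤ q.dropLast.length := dist_le _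
    _ = q.length - 1 := q.length_dropLast
    _ < G.dist r x := by omega

/-- If `x` were on a shortest path to `y`, then `x` would be at least as far from `r` as `y`;
so the tree path to `x` must run through `y`. -/
lemma IsTree.eq_penultimate_of_adj_of_dist_lt (hG : G.IsTree) {r x y : V} {q : G.Walk r x}
    (hq : q.IsPath) (hxy : G.Adj x y) (hy : G.dist r y < G.dist r x) : y = q.penultimate := by
  classical
  apply hG.isAcyclic.eq_penultimate_of_adj_end hq hxy
  by_contra hyq
  obtain ⟨p, hp, hplen⟩ := hG.connected.exists_path_of_dist r y
  have hx : x ∈ p.support :=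
    hG.isAcyclic.mem_support_of_ne_mem_support_of_adj_of_isPath hp hq hxy.symm hyq
  have : G.dist r x ≤ p.length := (dist_le _).trans (p.length_takeUntil_le_length hx)
  omega

lemma IsTree.eq_of_adj_of_dist_lt (hG : G.IsTree) (r : V) {x y₁ y₂ : V}
    (h₁ : G.Adj x y₁) (h₂ : G.Adj x y₂)
    (hd₁ : G.dist r y₁ < G.dist r x) (hd₂ : G.dist r y₂ < G.dist r x) : y₁ = y₂ := by
  obtain ⟨q, hq, -⟩ := hG.connected.exists_path_of_dist r x
  rw [hG.eq_penultimate_of_adj_of_dist_lt hq h₁ hd₁, hG.eq_penultimate_of_adj_of_dist_lt hq h₂ hd₂]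

lemma degree_ne_one_of_adj_of_adj {v a b : V} [Fintype (G.neighborSet v)]
    (ha : G.Adj v a) (hb : G.Adj v b) (hab : a ≠ b) : G.degree v ≠ 1 := by
  intro h
  obtain ⟨c, -, hc⟩ := degree_eq_one_iff_existsUnique_adj.mp h
  exact hab ((hc a ha).trans (hc b hb).symm)

end SimpleGraph

lemma SimpleGraph.IsTree.veDominates_of_veDominates_child (hG : G.IsTree) {r u w : V}
    (hdepth : ∀ v, G.dist r v ≤ G.dist r u + 1) (huw : G.Adj u w) (hw : G.dist r w < G.dist r u)
    {e : Sym2 V} (he : e ∈ G.edgeSet) (hu : veDominates G u e) : veDominates G w e := by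
  obtain ⟨x, hxe, hx⟩ := hu
  obtain ⟨y, rfl⟩ := Sym2.mem_iff_exists.mp hxe
  have hxy : G.Adj x y := he
  rcases hx with rfl | hux
  · exact ⟨x, Sym2.mem_mk_left x y, Or.inr huw.symm⟩
  by_cases hxw : x = w
  · exact ⟨x, Sym2.mem_mk_left x y, Or.inl hxw⟩
  have hx_deep : G.dist r x = G.dist r u + 1 := by
    rcases hG.dist_eq_dist_add_one_of_adj r hux with h | h
    · exact absurd (hG.eq_of_adj_of_dist_lt r hux huw (by omega) hw) hxw
    · exact h
  have hyu : y = u := by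
    refine hG.eq_of_adj_of_dist_lt r hxy hux.symm ?_ (by omega)
    have := hdepth y
    rcases hG.dist_eq_dist_add_one_of_adj r hxy with h | h <;> omega
  exact ⟨y, Sym2.mem_mk_right x y, Or.inr (hyu ▸ huw.symm)⟩

lemma IsVEDomSet.insert_erase {S : Finset V} {u w : V} [DecidableEq V] (hS : IsVEDomSet G S)
    (huw : ∀ e ∈ G.edgeSet, veDominates G u e → veDominates G w e) :
    IsVEDomSet G (insert w (S.erase u)) := by
  intro e he
  obtain ⟨v, hvS, hve⟩ := hS e he
  by_cases hvu : v = u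
  · subst hvu
    exact ⟨w, mem_insert_self _ _, huw e he hve⟩
  · exact ⟨v, mem_insert_of_mem (mem_erase.2 ⟨hvu, hvS⟩), hve⟩

lemma IsIndepSet.mono {S T : Finset V} (hS : IsIndepSet G S) (hTS : T ⊆ S) : IsIndepSet G T :=
  fun x hx y hy => hS x (hTS hx) y (hTS hy)

lemma IsIndepSet.insert_of_forall_not_adj {S : Finset V} {w : V} [DecidableEq V]
    (hS : IsIndepSet G S) (hw : ∀ v ∈ S, ¬G.Adj w v) : IsIndepSet G (insert w S) := by
  intro x hx y hy hxy
  rcases mem_insert.1 hx with rfl | hx <;> rcases mem_insert.1 hy with hyx | hy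
  · exact G.irrefl (hyx ▸ hxy)
  · exact hw y hy hxy
  · exact hw x hx (hyx ▸ hxy.symm)
  · exact hS x hx y hy hxy

lemma IsIndepSet.insert_erase_of_adj {S : Finset V} {u w : V} [DecidableEq V]
    (hS : IsIndepSet G S) (huw : G.Adj u w) (hfar : ∀ v ∈ S, v ≠ u → 3 ≤ G.dist u v) :
    IsIndepSet G (insert w (S.erase u)) := by
  refine (hS.mono (erase_subset u S)).insert_of_forall_not_adj fun v hv hwv => ?_
  have h₂ : G.dist u v ≤ 2 := SimpleGraph.dist_le (.cons huw (.cons hwv .nil))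
  have h₃ := hfar v (mem_of_mem_erase hv) (ne_of_mem_erase hv)
  omega

lemma card_insert_erase_of_notMem {α : Type*} [DecidableEq α] {S : Finset α} {u w : α}
    (hu : u ∈ S) (hw : w ∉ S) : #(insert w (S.erase u)) = #S := by
  rw [card_insert_of_notMem (fun h => hw (mem_of_mem_erase h)), card_erase_add_one hu]

end

theorem stmt4_general (G : SimpleGraph V) [DecidableRel G.Adj] (hT : G.IsTree)
    (r : V) (h : ℕ) (hub : ∀ v, G.dist r v ≤ h)
    (h3 : 3 ≤ h) (S : Finset V)
    (hdom : IsVEDomSet G S) (hind : IsIndepSet G S) (hcard : S.card = iVE G)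
    (hnoleaf : ∀ v ∈ S, G.degree v ≠ 1)
    (u : V) (huS : u ∈ S) (hdu : G.dist r u = h - 1)
    (hfar : ∀ v ∈ S, v ≠ u → 3 ≤ G.dist u v)
    (w : V) (huw : G.Adj u w) (hdw : G.dist r w = h - 2) :
    IsVEDomSet G (insert w (S.erase u)) ∧ IsIndepSet G (insert w (S.erase u)) ∧
      (insert w (S.erase u)).card = iVE G ∧
      ∀ v ∈ insert w (S.erase u), G.degree v ≠ 1 := by
  have hwS : w ∉ S := fun hw => by
    have := hfar w hw huw.ne'
    rw [SimpleGraph.dist_eq_one_iff_adj.mpr huw] at this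
    omega
  obtain ⟨p, hwp, hp⟩ := SimpleGraph.exists_adj_dist_lt (G := G) (r := r) (x := w) (by omega)
  refine ⟨hdom.insert_erase fun e he =>
      hT.veDominates_of_veDominates_child (r := r) (fun v => by have := hub v; omega) huw (by omega) he,
    hind.insert_erase_of_adj huw hfar,
    by rw [card_insert_erase_of_notMem huS hwS, hcard], ?_⟩
  rw [forall_mem_insert]
  exact ⟨SimpleGraph.degree_ne_one_of_adj_of_adj huw.symm hwp (by rintro rfl; omega),
    fun v hv => hnoleaf v (mem_of_mem_erase hv)⟩

/-- Pushing a deepest vertex of a minimum leafless independent ve-dominating set up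
to its parent preserves all the properties, provided all other vertices of `S` are
at distance at least 3 from it. -/
theorem stmt4 (G : SimpleGraph V) [DecidableRel G.Adj] (hT : G.IsTree)
    (r : V) (h : ℕ) (hub : ∀ v, G.dist r v ≤ h) (hatt : ∃ v, G.dist r v = h)
    (h3 : 3 ≤ h) (S : Finset V)
    (hdom : IsVEDomSet G S) (hind : IsIndepSet G S) (hcard : S.card = iVE G)
    (hnoleaf : ∀ v ∈ S, G.degree v ≠ 1)
    (u : V) (huS : u ∈ S) (hdu : G.dist r u = h - 1)
    (hfar : ∀ v ∈ S, v ≠ u → 3 ≤ G.dist u v)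
    (w : V) (huw : G.Adj u w) (hdw : G.dist r w = h - 2) :
    IsVEDomSet G (insert w (S.erase u)) ∧ IsIndepSet G (insert w (S.erase u)) ∧
      (insert w (S.erase u)).card = iVE G ∧
      ∀ v ∈ insert w (S.erase u), G.degree v ≠ 1 :=
  stmt4_general G hT r h hub h3 S hdom hind hcard hnoleaf u huS hdu hfar w huw hdw
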